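/- Let A be a commutative ring, f ∈ A a non-zero-divisor, and Â = lim_n A/(f^n) the f-adic completion. If M is an A-module that is f-regular (multiplication by f on M is injective), then Â ⊗_A M is f-regular as well: multiplication by f on Â ⊗_A M is injective. -/

import Mathlib

/-!
Write `B = Â`. The kernel of `Â → A/(f)` is `f Â`, so `A/(f) → B/(f)` is bijective, and `B` has
no `f`-torsion; together, the square formed by `f` on `A` and on `B` is cartesian. Present `M` as
`F/K` with `F` free. If `f z = 0` in `B ⊗ M`, lift `z` to `w ∈ B ⊗ F`; then `f w` lies in the
image of `B ⊗ K`, and since `B = A + f B` we may change `w` by that image so that `f w = 1 ⊗ ρ`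
with `ρ ∈ K`. Tensoring the cartesian square with the flat module `F` gives `ρ = f g` and
`w = 1 ⊗ g`; `f`-regularity of `M` puts `g` in `K`, so `w` comes from `B ⊗ K` and `z = 0`.
-/

open TensorProduct

theorem Ideal.mem_span_singleton_pow_smul_top_iff {A : Type*} [CommRing A] {f x : A} {n : ℕ} :
    x ∈ (Ideal.span {f} ^ n • ⊤ : Submodule A A) ↔ f ^ n ∣ x := by
  rw [smul_eq_mul, Ideal.mul_top, Ideal.span_singleton_pow, Ideal.mem_span_singleton]

namespace AdicCompletion

variable {A : Type*} [CommRing A] {f : A}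

theorem isSMulRegular_span_singleton (hf : IsSMulRegular A f) :
    IsSMulRegular (AdicCompletion (Ideal.span {f}) A) f := by
  refine .of_right_eq_zero_of_smul fun c hc ↦ ext fun n ↦ ?_
  obtain ⟨a, ha⟩ := Submodule.Quotient.mk_surjective _ (c.val (n + 1))
  obtain ⟨b, hb⟩ : f ^ (n + 1) ∣ f • a := by
    rw [← Ideal.mem_span_singleton_pow_smul_top_iff, ← Submodule.Quotient.mk_eq_zero,
      Submodule.Quotient.mk_smul, ha, ← val_smul_apply, hc, val_zero_apply]
  have hab : a = f ^ n * b :=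
    hf (show f • a = f • (f ^ n * b) by rw [hb, smul_eq_mul, pow_succ']; ring)
  rw [← c.property n.le_succ, ← ha, val_zero_apply]
  exact (Submodule.Quotient.mk_eq_zero _).2
    (Ideal.mem_span_singleton_pow_smul_top_iff.2 (hab ▸ dvd_mul_right _ _))

variable (f)

theorem evalOneₐ_eq_zero_iff (x : AdicCompletion (Ideal.span {f}) A) :
    evalOneₐ (Ideal.span {f}) x = 0 ↔ ∃ c, x = f • c := by
  change (evalOneₐ (Ideal.span {f})).toRingHom x = 0 ↔ _
  rw [← RingHom.mem_ker, ker_evalOneₐ_eq_map _ (Submodule.fg_span_singleton f), Ideal.map_span,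
    Set.image_singleton, Ideal.mem_span_singleton']
  simp only [Algebra.smul_def, mul_comm, eq_comm]

theorem exists_eq_algebraMap_add_smul (x : AdicCompletion (Ideal.span {f}) A) :
    ∃ a c, x = algebraMap A _ a + f • c := by
  obtain ⟨a, ha⟩ := Ideal.Quotient.mk_surjective (evalOneₐ (Ideal.span {f}) x)
  obtain ⟨c, hc⟩ := (evalOneₐ_eq_zero_iff f (x - algebraMap A _ a)).1 (by
    rw [map_sub, AlgHom.commutes, Ideal.Quotient.algebraMap_eq, ha, sub_self])
  exact ⟨a, c, eq_add_of_sub_eq' hc⟩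

theorem dvd_of_algebraMap_eq_smul {a : A} {c : AdicCompletion (Ideal.span {f}) A}
    (h : algebraMap A _ a = f • c) : f ∣ a := by
  rw [← Ideal.mem_span_singleton, ← Ideal.Quotient.eq_zero_iff_mem,
    ← Ideal.Quotient.algebraMap_eq, ← AlgHom.commutes (evalOneₐ (Ideal.span {f})), h, map_smul,
    Algebra.smul_def, Ideal.Quotient.algebraMap_eq,
    Ideal.Quotient.eq_zero_iff_mem.2 (Ideal.mem_span_singleton_self f), zero_mul]

theorem exists_eq_mul_of_algebraMap_eq_smul (hf : IsSMulRegular A f) {a : A}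
    {b : AdicCompletion (Ideal.span {f}) A} (h : algebraMap A _ a = f • b) :
    ∃ a', a = f * a' ∧ b = algebraMap A _ a' := by
  obtain ⟨a', rfl⟩ := dvd_of_algebraMap_eq_smul f h
  refine ⟨a', rfl, isSMulRegular_span_singleton hf ?_⟩
  simp only [← h, map_mul, Algebra.smul_def]

end AdicCompletion

/-- In this form the cartesian square survives flat base change. -/
theorem Algebra.exact_prod_coprod_of_cartesian {A B : Type*} [CommRing A] [CommRing B]
    [Algebra A B] (f : A)
    (hcart : ∀ (a : A) (b : B), algebraMap A B a = f • b →
      ∃ a', a = f * a' ∧ b = algebraMap A B a') :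
    Function.Exact ((f • LinearMap.id).prod (Algebra.linearMap A B))
      ((Algebra.linearMap A B).coprod (-(f • LinearMap.id))) := by
  rintro ⟨a, b⟩
  suffices algebraMap A B a = f • b ↔ ∃ a', a = f * a' ∧ b = algebraMap A B a' by
    simpa [← sub_eq_add_neg, sub_eq_zero, eq_comm (a := a), eq_comm (a := b)] using this
  refine ⟨hcart a b, ?_⟩
  rintro ⟨a', rfl, rfl⟩
  rw [map_mul, Algebra.smul_def]

namespace TensorProduct

variable {A B : Type*} [CommRing A] [CommRing B] [Algebra A B] (f : A)

theorem algebraMap_tmul {P : Type*} [AddCommGroup P] [Module A P] (a : A) (p : P) :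
    algebraMap A B a ⊗ₜ[A] p = 1 ⊗ₜ (a • p) := by
  rw [Algebra.algebraMap_eq_smul_one, smul_tmul]

theorem rTensor_algebraLinearMap_apply {P : Type*} [AddCommGroup P] [Module A P] (y : A ⊗[A] P) :
    (Algebra.linearMap A B).rTensor P y = 1 ⊗ₜ TensorProduct.lid A P y := by
  induction y with
  | zero => simp
  | tmul a p => simp [algebraMap_tmul]
  | add x y hx hy => rw [map_add, map_add, hx, hy, tmul_add]

theorem exists_eq_one_tmul_add_smul (hB : ∀ b : B, ∃ a c, b = algebraMap A B a + f • c)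
    {P : Type*} [AddCommGroup P] [Module A P] (x : B ⊗[A] P) :
    ∃ (p : P) (y : B ⊗[A] P), x = 1 ⊗ₜ p + f • y := by
  induction x with
  | zero => exact ⟨0, 0, by simp⟩
  | tmul b p =>
    obtain ⟨a, c, rfl⟩ := hB b
    exact ⟨a • p, c ⊗ₜ p, by rw [add_tmul, algebraMap_tmul, smul_tmul']⟩
  | add x y hx hy =>
    obtain ⟨p, x', rfl⟩ := hx
    obtain ⟨q, y', rfl⟩ := hy
    exact ⟨p + q, x' + y', by rw [tmul_add, smul_add]; abel⟩

theorem exists_eq_one_tmul_of_smul_eq_one_tmul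
    (hcart : ∀ (a : A) (b : B), algebraMap A B a = f • b →
      ∃ a', a = f * a' ∧ b = algebraMap A B a')
    {F : Type*} [AddCommGroup F] [Module A F] [Module.Flat A F] {w : B ⊗[A] F} {p : F}
    (h : f • w = 1 ⊗ₜ p) : ∃ q, p = f • q ∧ w = 1 ⊗ₜ q := by
  have hex := Module.Flat.rTensor_exact F (Algebra.exact_prod_coprod_of_cartesian f hcart)
  set v := (LinearMap.inl A A B).rTensor F (1 ⊗ₜ p) + (LinearMap.inr A A B).rTensor F w
  obtain ⟨y, hy⟩ := (hex v).1 (by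
    rw [map_add, ← LinearMap.rTensor_comp_apply, ← LinearMap.rTensor_comp_apply,
      LinearMap.coprod_inl, LinearMap.coprod_inr, LinearMap.rTensor_neg, LinearMap.rTensor_smul,
      LinearMap.rTensor_id, LinearMap.neg_apply, LinearMap.smul_apply, LinearMap.id_apply,
      LinearMap.rTensor_tmul, Algebra.linearMap_apply, map_one, h, add_neg_cancel])
  refine ⟨TensorProduct.lid A F y, ?_, ?_⟩
  · have hfst := congrArg ((LinearMap.fst A A B).rTensor F) hy
    simp only [v, map_add, ← LinearMap.rTensor_comp_apply, LinearMap.fst_prod,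
      LinearMap.fst_comp_inl, LinearMap.fst_comp_inr, LinearMap.rTensor_smul, LinearMap.rTensor_id,
      LinearMap.rTensor_zero, LinearMap.smul_apply, LinearMap.id_apply, LinearMap.zero_apply, add_zero] at hfst
    rw [← map_smul, hfst, lid_tmul, one_smul]
  · have hsnd := congrArg ((LinearMap.snd A A B).rTensor F) hy
    simp only [v, map_add, ← LinearMap.rTensor_comp_apply, LinearMap.snd_prod,
      LinearMap.snd_comp_inl, LinearMap.snd_comp_inr, LinearMap.rTensor_id, LinearMap.rTensor_zero,
      LinearMap.id_apply, LinearMap.zero_apply, zero_add, rTensor_algebraLinearMap_apply] at hsnd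
    exact hsnd.symm

theorem isSMulRegular_of_cartesian (hB : ∀ b : B, ∃ a c, b = algebraMap A B a + f • c)
    (hcart : ∀ (a : A) (b : B), algebraMap A B a = f • b →
      ∃ a', a = f * a' ∧ b = algebraMap A B a')
    {M : Type*} [AddCommGroup M] [Module A M] (hM : IsSMulRegular M f) :
    IsSMulRegular (B ⊗[A] M) f := by
  set π := Finsupp.linearCombination A (id : M → M)
  have hπ : Function.Surjective π := Finsupp.linearCombination_id_surjective A M
  have hex := _root_.lTensor_exact (M := LinearMap.ker π) B π.exact_subtype_ker_map hπ
  refine (isSMulRegular_iff_right_eq_zero_of_smul (M := B ⊗[A] M)).2 fun z hz ↦ ?_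
  obtain ⟨w, rfl⟩ := LinearMap.lTensor_surjective B hπ z
  obtain ⟨y, hy⟩ := (hex (f • w)).1 (by rw [map_smul, hz])
  obtain ⟨ρ, y', rfl⟩ := exists_eq_one_tmul_add_smul (P := LinearMap.ker π) f hB y
  have hfw : f • (w - (LinearMap.ker π).subtype.lTensor B y') = 1 ⊗ₜ (ρ : M →₀ A) := by
    rw [smul_sub, ← hy, map_add, map_smul, LinearMap.lTensor_tmul, Submodule.subtype_apply,
      add_sub_cancel_right]
  obtain ⟨g, hρ, hw⟩ := exists_eq_one_tmul_of_smul_eq_one_tmul f hcart hfw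
  have hg : π g = 0 := hM.right_eq_zero_of_smul (by rw [← map_smul, ← hρ]; exact ρ.2)
  rw [sub_eq_iff_eq_add.1 hw, map_add, LinearMap.lTensor_tmul, hg, tmul_zero, zero_add,
    hex.apply_apply_eq_zero]

end TensorProduct

/-- If `f ∈ A` is a non-zero-divisor and `M` is an `f`-regular `A`-module
(multiplication by `f` is injective on `M`), then multiplication by `f` is also
injective on `Â ⊗ M`, where `Â = lim A/(fⁿ)` is the `f`-adic completion. -/
theorem stmt_17 {A : Type} [CommRing A] (f : A) (hf : f ∈ nonZeroDivisors A)
    (M : Type) [AddCommGroup M] [Module A M]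
    (hreg : Function.Injective (fun m : M => f • m)) :
    Function.Injective
      (fun x : (AdicCompletion (Ideal.span {f}) A) ⊗[A] M => f • x) :=
  TensorProduct.isSMulRegular_of_cartesian f (AdicCompletion.exists_eq_algebraMap_add_smul f)
    (fun _ _ ↦ AdicCompletion.exists_eq_mul_of_algebraMap_eq_smul f
      (Module.Flat.isSMulRegular_of_nonZeroDivisors hf)) hreg
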